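/- The sequence q ↦ cap(q) converges as q → ∞ and its limit equals 1. -/

import Mathlib

open Filter

/-- The length-`C` prefix of the cyclically alternating sequence `1,2,…,q,1,2,…,q,…`:
its `i`-th symbol (1-indexed) is `((i-1) mod q) + 1`. -/
def altSeq (q C : ℕ) : List ℕ := (List.range C).map (fun i => i % q + 1)

/-- `M q C L`: the number of distinct length-`L` subsequences of `altSeq q C`. -/
def M (q C L : ℕ) : ℕ :=
  ((altSeq q C).sublists.toFinset.filter (fun s => s.length = L)).card

/-- `cap q = limsup_{C→∞} log₂ (Σ_{L=0}^{C} M_q(C,L)) / C`. -/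
noncomputable def capFlex (q : ℕ) : ℝ :=
  Filter.atTop.limsup
    (fun C : ℕ => Real.logb 2 (∑ L ∈ Finset.range (C + 1), M q C L) / C)

namespace Stmt8Aux

open List Real

lemma sum_M (q C : ℕ) :
    ∑ L ∈ Finset.range (C + 1), M q C L = (altSeq q C).sublists.toFinset.card := by
  simp only [M]
  refine (Finset.card_eq_sum_card_fiberwise (f := List.length)
    (t := Finset.range (C + 1)) ?_).symm
  intro s hs
  simp only [Finset.mem_coe, List.mem_toFinset, List.mem_sublists] at hs
  have h := hs.length_le
  simp only [altSeq, List.length_map, List.length_range] at h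
  simp only [Finset.mem_coe, Finset.mem_range]
  omega

lemma card_le (q C : ℕ) : (altSeq q C).sublists.toFinset.card ≤ 2 ^ C := by
  calc (altSeq q C).sublists.toFinset.card ≤ (altSeq q C).sublists.length :=
        List.toFinset_card_le _
    _ = 2 ^ C := by simp [List.length_sublists, altSeq]


variable (q : ℕ)

/-- the inner part of a block encoding subset `s ⊆ range (q-1)` -/
def inner (s : Finset ℕ) : List ℕ := ((List.range (q - 1)).filter (· ∈ s)).map (· + 1)

def block (s : Finset ℕ) : List ℕ := inner q s ++ [q]

def B : List ℕ := (List.range q).map (· + 1)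

lemma block_sublist (hq : 1 ≤ q) (s : Finset ℕ) : block q s <+ B q := by
  have hB : B q = (List.range (q - 1)).map (· + 1) ++ [q] := by
    conv_lhs => rw [B, show q = (q - 1) + 1 by omega, List.range_succ]
    simp [show q - 1 + 1 = q by omega]
  rw [hB, block]
  exact ((List.filter_sublist).map _).append (List.Sublist.refl _)

lemma altSeq_mul (hq : 1 ≤ q) (k : ℕ) :
    altSeq q (q * k) = (List.replicate k (B q)).flatten := by
  induction k with
  | zero => simp [altSeq]
  | succ n ih =>
    have h1 : q * (n + 1) = q * n + q := by ring
    rw [h1, altSeq, List.range_add, List.map_append, ← altSeq, ih,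
      List.replicate_succ', List.flatten_append]
    congr 1
    simp only [List.flatten, List.map_map, B, List.flatten_cons, List.flatten_nil,
      List.append_eq, List.append_nil]
    apply List.map_congr_left
    intro i hi
    simp only [Function.comp_apply]
    have : i < q := List.mem_range.mp hi
    rw [Nat.mul_add_mod, Nat.mod_eq_of_lt this]

lemma flatten_sublist {l₁ l₂ : List (List ℕ)} (h : List.Forall₂ List.Sublist l₁ l₂) :
    l₁.flatten <+ l₂.flatten := by
  induction h with
  | nil => simp
  | cons h _ ih => simpa using h.append ih

def enc (k : ℕ) (f : Fin k → Finset ℕ) : List ℕ :=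
  (List.ofFn (fun j => block q (f j))).flatten

lemma enc_sublist (hq : 1 ≤ q) {k C : ℕ} (hk : q * k ≤ C) (f : Fin k → Finset ℕ) :
    enc q k f <+ altSeq q C := by
  have h1 : enc q k f <+ (List.replicate k (B q)).flatten := by
    apply flatten_sublist
    rw [List.forall₂_iff_get]
    refine ⟨by simp, ?_⟩
    intro i h1 h2
    simp only [List.get_eq_getElem, List.getElem_ofFn, List.getElem_replicate]
    exact block_sublist q hq _
  rw [← altSeq_mul q hq k] at h1
  refine h1.trans ?_
  exact (List.range_sublist.mpr hk).map _

lemma flatten_map_append (x : ℕ) (l : List (List ℕ)) :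
    (l.map (· ++ [x])).flatten = [x].intercalate (l ++ [[]]) := by
  induction l with
  | nil => simp [List.intercalate]
  | cons a t ih =>
    rcases t with _ | ⟨b, t⟩
    · simp [List.intercalate]
    · simp only [List.map_cons, List.flatten_cons] at ih ⊢
      rw [ih]
      simp [List.intercalate, List.intersperse]

lemma not_mem_inner (s : Finset ℕ) : q ∉ inner q s := by
  intro h
  simp only [inner, List.mem_map, List.mem_filter, List.mem_range] at h
  obtain ⟨y, ⟨hy, -⟩, hyq⟩ := h
  omega

lemma enc_injOn {k : ℕ} {f g : Fin k → Finset ℕ}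
    (hf : ∀ j, f j ⊆ Finset.range (q - 1)) (hg : ∀ j, g j ⊆ Finset.range (q - 1))
    (h : enc q k f = enc q k g) : f = g := by
  have hmf : enc q k f = [q].intercalate ((List.ofFn fun j => inner q (f j)) ++ [[]]) := by
    rw [enc, show (List.ofFn fun j => block q (f j))
        = (List.ofFn fun j => inner q (f j)).map (· ++ [q]) by
      rw [List.map_ofFn]; rfl, flatten_map_append]
  have hmg : enc q k g = [q].intercalate ((List.ofFn fun j => inner q (g j)) ++ [[]]) := by
    rw [enc, show (List.ofFn fun j => block q (g j))
        = (List.ofFn fun j => inner q (g j)).map (· ++ [q]) by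
      rw [List.map_ofFn]; rfl, flatten_map_append]
  have hsplit : ∀ (h : Fin k → Finset ℕ),
      (([q].intercalate ((List.ofFn fun j => inner q (h j)) ++ [[]])).splitOn q)
        = (List.ofFn fun j => inner q (h j)) ++ [[]] := by
    intro h
    apply List.splitOn_intercalate
    · intro l hl
      rcases List.mem_append.mp hl with hl | hl
      · rw [List.mem_ofFn] at hl
        obtain ⟨j, rfl⟩ := hl
        exact not_mem_inner q _
      · simp at hl; subst hl; simp
    · simp
  have h2 : (List.ofFn fun j => inner q (f j)) = (List.ofFn fun j => inner q (g j)) := by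
    have := congrArg (fun l => l.splitOn q) (hmf ▸ hmg ▸ h)
    simp only [hsplit] at this
    exact List.append_cancel_right this
  have h3 : ∀ j, inner q (f j) = inner q (g j) := by
    intro j
    have := List.ofFn_injective h2
    exact congrFun this j
  funext j
  have hj := h3 j
  ext x
  constructor
  · intro hx
    have hx' : x + 1 ∈ inner q (f j) := by
      simp only [inner, List.mem_map, List.mem_filter, List.mem_range]
      exact ⟨x, ⟨Finset.mem_range.mp (hf j hx), by simpa using hx⟩, rfl⟩
    rw [hj] at hx'
    simp only [inner, List.mem_map, List.mem_filter, List.mem_range] at hx'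
    obtain ⟨y, ⟨-, hy⟩, hxy⟩ := hx'
    have : y = x := by omega
    subst this; simpa using hy
  · intro hx
    have hx' : x + 1 ∈ inner q (g j) := by
      simp only [inner, List.mem_map, List.mem_filter, List.mem_range]
      exact ⟨x, ⟨Finset.mem_range.mp (hg j hx), by simpa using hx⟩, rfl⟩
    rw [← hj] at hx'
    simp only [inner, List.mem_map, List.mem_filter, List.mem_range] at hx'
    obtain ⟨y, ⟨-, hy⟩, hxy⟩ := hx'
    have : y = x := by omega
    subst this; simpa using hy

lemma card_lower (hq : 1 ≤ q) (C : ℕ) :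
    2 ^ ((q - 1) * (C / q)) ≤ (altSeq q C).sublists.toFinset.card := by
  set k := C / q with hk
  set D : Finset (Fin k → Finset ℕ) :=
    Fintype.piFinset (fun _ : Fin k => (Finset.range (q - 1)).powerset) with hD
  have hcard : D.card = 2 ^ ((q - 1) * k) := by
    rw [hD, Fintype.card_piFinset]
    simp [Finset.card_powerset, Finset.card_range, ← pow_mul, mul_comm]
  have hinj : Set.InjOn (enc q k) D := by
    intro f hf g hg h
    refine enc_injOn q ?_ ?_ h <;> intro j
    · exact Finset.mem_powerset.mp ((Fintype.mem_piFinset.mp hf) j)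
    · exact Finset.mem_powerset.mp ((Fintype.mem_piFinset.mp hg) j)
  calc 2 ^ ((q - 1) * k) = D.card := hcard.symm
    _ = (D.image (enc q k)).card := (Finset.card_image_of_injOn hinj).symm
    _ ≤ (altSeq q C).sublists.toFinset.card := by
        apply Finset.card_le_card
        intro l hl
        obtain ⟨f, hf, rfl⟩ := Finset.mem_image.mp hl
        rw [List.mem_toFinset, List.mem_sublists]
        exact enc_sublist q hq (Nat.mul_div_le C q) f



noncomputable def g (q C : ℕ) : ℝ :=
  Real.logb 2 (∑ L ∈ Finset.range (C + 1), M q C L) / C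

lemma capFlex_eq (q : ℕ) : capFlex q = Filter.atTop.limsup (g q) := rfl

def N (q C : ℕ) : ℕ := ∑ L ∈ Finset.range (C + 1), M q C L

lemma g_eq (q C : ℕ) : g q C = Real.logb 2 (N q C) / C := by
  unfold g N
  push_cast
  rfl

lemma one_le_N (q C : ℕ) : 1 ≤ N q C := by
  rw [N, sum_M]
  refine Finset.card_pos.mpr ⟨[], ?_⟩
  simp [List.mem_sublists]

lemma Npos (q C : ℕ) : (0 : ℝ) < (N q C : ℝ) := by
  exact_mod_cast Nat.lt_of_lt_of_le Nat.zero_lt_one (one_le_N q C)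

lemma g_nonneg (q C : ℕ) : 0 ≤ g q C := by
  rw [g_eq]
  apply div_nonneg _ (Nat.cast_nonneg C)
  exact Real.logb_nonneg one_lt_two (by exact_mod_cast one_le_N q C)

lemma g_le_one (q C : ℕ) : g q C ≤ 1 := by
  rcases Nat.eq_zero_or_pos C with rfl | hC
  · rw [g_eq]; simp
  rw [g_eq, div_le_one (by exact_mod_cast hC)]
  calc Real.logb 2 (N q C) ≤ Real.logb 2 ((2 : ℝ) ^ C) := by
        apply Real.logb_le_logb_of_le one_lt_two (Npos q C)
        exact_mod_cast (sum_M q C) ▸ card_le q C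
    _ = C := by rw [Real.logb_pow, Real.logb_self_eq_one one_lt_two]; ring

lemma cap_le_one (q : ℕ) : capFlex q ≤ 1 := by
  rw [capFlex_eq]
  apply Filter.limsup_le_of_le
  · exact Filter.isCoboundedUnder_le_of_le atTop (x := 0) (fun C => g_nonneg q C)
  · exact Eventually.of_forall (g_le_one q)

noncomputable def hlow (q : ℕ) : ℕ → ℝ :=
  fun C => (((q : ℝ) - 1) * ((C : ℝ) - ((q : ℝ) - 1))) / ((q : ℝ) * C)

lemma g_lower (q : ℕ) (hq : 1 ≤ q) (C : ℕ) (hC : 1 ≤ C) : hlow q C ≤ g q C := by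
  have hCpos : (0 : ℝ) < C := by exact_mod_cast hC
  have hqpos : (0 : ℝ) < q := by exact_mod_cast hq
  set a : ℕ := (q - 1) * (C / q) with ha
  have h1 : (a : ℝ) / C ≤ g q C := by
    rw [g_eq]
    gcongr
    calc (a : ℝ) = Real.logb 2 ((2 : ℝ) ^ a) := by
          rw [Real.logb_pow, Real.logb_self_eq_one one_lt_two]; ring
      _ ≤ Real.logb 2 (N q C) := by
          apply Real.logb_le_logb_of_le one_lt_two (by positivity)
          exact_mod_cast (sum_M q C) ▸ card_lower q hq C
  refine le_trans ?_ h1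
  -- hlow q C ≤ a / C
  have hmod : (C : ℝ) - ((q : ℝ) - 1) ≤ (q : ℝ) * ((C / q : ℕ) : ℝ) := by
    have h2 : q * (C / q) + C % q = C := Nat.div_add_mod C q
    have h3 : C % q < q := Nat.mod_lt _ hq
    have h4 : C ≤ q * (C / q) + (q - 1) := by omega
    have := (Nat.cast_le (α := ℝ)).mpr h4
    push_cast at this
    have hq1 : (1:ℝ) ≤ q := by exact_mod_cast hq
    push_cast [Nat.cast_sub hq] at this
    linarith
  rw [hlow, div_le_div_iff₀ (by positivity) hCpos]
  have haR : (a : ℝ) = ((q : ℝ) - 1) * ((C / q : ℕ) : ℝ) := by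
    rw [ha]
    push_cast [Nat.cast_sub hq]
    ring
  have hq1 : (0:ℝ) ≤ (q : ℝ) - 1 := by
    have : (1:ℝ) ≤ q := by exact_mod_cast hq
    linarith
  nlinarith [mul_le_mul_of_nonneg_left hmod hq1, mul_pos hqpos hCpos]

lemma tendsto_hlow (q : ℕ) (hq : 1 ≤ q) :
    Filter.Tendsto (hlow q) atTop (nhds (1 - 1 / (q : ℝ))) := by
  have hqpos : (0 : ℝ) < q := by exact_mod_cast hq
  have h0 : Filter.Tendsto (fun C : ℕ => ((q : ℝ) - 1) / q * (1 - ((q : ℝ) - 1) * (1 / C)))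
      atTop (nhds (((q : ℝ) - 1) / q * (1 - ((q : ℝ) - 1) * 0))) := by
    exact Filter.Tendsto.const_mul _ (Filter.Tendsto.const_sub _
      (Filter.Tendsto.const_mul _ tendsto_one_div_atTop_nhds_zero_nat))
  have heq : ((q : ℝ) - 1) / q * (1 - ((q : ℝ) - 1) * 0) = 1 - 1 / (q : ℝ) := by
    field_simp
    ring
  rw [heq] at h0
  apply h0.congr'
  filter_upwards [eventually_ge_atTop 1] with C hC
  have hCpos : (0 : ℝ) < C := by exact_mod_cast hC
  rw [hlow]
  field_simp

lemma cap_lower (q : ℕ) (hq : 1 ≤ q) : 1 - 1 / (q : ℝ) ≤ capFlex q := by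
  rw [capFlex_eq]
  have ht := tendsto_hlow q hq
  have h1 : Filter.atTop.limsup (hlow q) ≤ Filter.atTop.limsup (g q) := by
    apply Filter.limsup_le_limsup
    · filter_upwards [eventually_ge_atTop 1] with C hC
      exact g_lower q hq C hC
    · exact ht.isCoboundedUnder_le
    · exact ⟨1, Filter.eventually_map.mpr (Eventually.of_forall (g_le_one q))⟩
  rwa [ht.limsup_eq] at h1

end Stmt8Aux

theorem stmt8 :
    Filter.Tendsto (fun q : ℕ => capFlex q) Filter.atTop (nhds 1) := by
  have hlow : Filter.Tendsto (fun q : ℕ => 1 - 1 / (q : ℝ)) atTop (nhds 1) := by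
    have := Filter.Tendsto.const_sub (1 : ℝ) tendsto_one_div_atTop_nhds_zero_nat
    simpa using this
  apply tendsto_of_tendsto_of_tendsto_of_le_of_le' hlow tendsto_const_nhds
  · filter_upwards [eventually_ge_atTop 1] with q hq
    exact Stmt8Aux.cap_lower q hq
  · exact Eventually.of_forall (fun q => Stmt8Aux.cap_le_one q)
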